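/- Suppose (A,B) ∈ M_{n×n}(ℂ) × M_{n×m}(ℂ) is not controllable, so there is a proper A-invariant subspace W of dimension r < n containing Im B. In a basis adapted to W, A has block upper-triangular form with blocks A₁₁ (r×r), A₁₂, 0, A₂₂ and B = (B₁; 0). For the one-parameter subgroup λ(ζ) = diag(1,...,1, ζ⁻¹,...,ζ⁻¹) (with r ones), the limit lim_{ζ→0} λ(ζ)·(A,B) = lim_{ζ→0} (λ(ζ)Aλ(ζ)⁻¹, λ(ζ)B) exists, and the Hilbert–Mumford pairing ⟨det, λ⟩ = −(n − r) is negative. -/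

import Mathlib

/-!
Conjugation by `λ(ζ)` multiplies the entry `A i j` by `λ_i / λ_j`. The block below `W` would be
scaled by `ζ⁻¹` but vanishes because `W` is `A`-invariant, the block to the right of `W` is scaled
by `ζ`, and the diagonal blocks are untouched; so for `ζ ≠ 0` the conjugate is affine in `ζ` and
has a limit. `λ(ζ)` fixes `B` outright, since the rows of `B` outside `W` vanish.
-/

open Matrix Filter Topology Finset

namespace Matrix

variable {ι κ 𝕜 : Type*} [Fintype ι] [DecidableEq ι] {p : ι → Prop} [DecidablePred p]

variable (p) in
def upperRightBlock [Zero 𝕜] (A : Matrix ι ι 𝕜) : Matrix ι ι 𝕜 :=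
  fun i j => if p i ∧ ¬p j then A i j else 0

variable [Field 𝕜]

theorem diagonal_ite_one_mul_of_eq_zero {B : Matrix ι κ 𝕜} (hB : ∀ i u, ¬p i → B i u = 0)
    (c : 𝕜) : diagonal (fun i => if p i then 1 else c) * B = B := by
  ext i u
  by_cases hi : p i <;> simp [diagonal_mul, hi, hB]

theorem diagonal_ite_conj_eq {A : Matrix ι ι 𝕜} (hA : ∀ i j, ¬p i → p j → A i j = 0)
    {ζ : 𝕜} (hζ : ζ ≠ 0) :
    diagonal (fun i => if p i then 1 else ζ⁻¹) * A * diagonal (fun i => if p i then 1 else ζ)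
      = A + (ζ - 1) • upperRightBlock p A := by
  ext i j
  by_cases hi : p i <;> by_cases hj : p j <;>
    simp [diagonal_mul, mul_diagonal, upperRightBlock, hi, hj, hA]
  · ring
  · field_simp

theorem tendsto_diagonal_ite_conj [TopologicalSpace 𝕜] [IsTopologicalRing 𝕜]
    {A : Matrix ι ι 𝕜} (hA : ∀ i j, ¬p i → p j → A i j = 0) :
    Tendsto (fun ζ : 𝕜 =>
        diagonal (fun i => if p i then 1 else ζ⁻¹) * A * diagonal (fun i => if p i then 1 else ζ))
      (𝓝[≠] 0) (𝓝 (A - upperRightBlock p A)) := by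
  have hlim : Tendsto (fun ζ : 𝕜 => A + (ζ - 1) • upperRightBlock p A) (𝓝[≠] 0)
      (𝓝 (A - upperRightBlock p A)) := by
    refine (Continuous.tendsto' (by fun_prop) 0 _ ?_).mono_left nhdsWithin_le_nhds
    simp [sub_eq_add_neg]
  refine hlim.congr' ?_
  filter_upwards [self_mem_nhdsWithin] with ζ hζ
  exact (diagonal_ite_conj_eq hA hζ).symm

end Matrix

theorem sum_ite_val_lt_zero_neg_one {n r : ℕ} (hr : r ≤ n) :
    (∑ i : Fin n, (if (i : ℕ) < r then (0 : ℤ) else -1)) = -((n : ℤ) - r) := by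
  have hcard : #{i : Fin n | ¬(i : ℕ) < r} = n - r := by
    rw [filter_not, card_sdiff_of_subset (filter_subset _ _), card_univ, Fintype.card_fin,
      Fin.card_filter_val_lt, min_eq_right hr]
  rw [sum_ite, sum_const_zero, sum_const, hcard]
  simp [hr]

/-- for a non-controllable pair `(A,B)` in block form adapted to a proper
`A`-invariant subspace `W` of dimension `r` containing `Im B`, and the 1-PS
`λ(ζ) = diag(1,...,1,ζ⁻¹,...,ζ⁻¹)` (with `r` ones), the limit
`lim_{ζ→0} (λ(ζ) A λ(ζ)⁻¹, λ(ζ) B)` exists, and the Hilbert–Mumford pairing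
`⟨det, λ⟩ = −(n − r)` is negative. -/
theorem stmt7 (n m r : ℕ) (hr : r < n)
    (A : Matrix (Fin n) (Fin n) ℂ) (B : Matrix (Fin n) (Fin m) ℂ)
    (hA : ∀ i j : Fin n, r ≤ (i : ℕ) → (j : ℕ) < r → A i j = 0)
    (hB : ∀ (i : Fin n) (u : Fin m), r ≤ (i : ℕ) → B i u = 0) :
    (∃ (A' : Matrix (Fin n) (Fin n) ℂ) (B' : Matrix (Fin n) (Fin m) ℂ),
      Tendsto
        (fun ζ : ℂ =>
          (Matrix.diagonal (fun i : Fin n => if (i : ℕ) < r then (1 : ℂ) else ζ⁻¹) * A *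
              Matrix.diagonal (fun i : Fin n => if (i : ℕ) < r then (1 : ℂ) else ζ),
           Matrix.diagonal (fun i : Fin n => if (i : ℕ) < r then (1 : ℂ) else ζ⁻¹) * B))
        (nhdsWithin 0 {0}ᶜ) (nhds (A', B'))) ∧
    (∑ i : Fin n, (if (i : ℕ) < r then (0 : ℤ) else -1)) = -((n : ℤ) - r) ∧
    -((n : ℤ) - r) < 0 := by
  have hA' : ∀ i j : Fin n, ¬(i : ℕ) < r → (j : ℕ) < r → A i j = 0 :=
    fun i j hi hj => hA i j (not_lt.mp hi) hj
  have hB' : ∀ (i : Fin n) (u : Fin m), ¬(i : ℕ) < r → B i u = 0 :=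
    fun i u hi => hB i u (not_lt.mp hi)
  have hBfixed : Tendsto (fun ζ : ℂ =>
      diagonal (fun i : Fin n => if (i : ℕ) < r then (1 : ℂ) else ζ⁻¹) * B)
      (𝓝[≠] 0) (𝓝 B) :=
    tendsto_const_nhds.congr fun ζ => (diagonal_ite_one_mul_of_eq_zero hB' ζ⁻¹).symm
  exact ⟨⟨_, B, (tendsto_diagonal_ite_conj hA').prodMk_nhds hBfixed⟩,
    sum_ite_val_lt_zero_neg_one hr.le, by omega⟩
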